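/- Let A be a unital C*-algebra over ℂ, let f ∈ A be self-adjoint, and let t ∈ A be positive and invertible. Then ‖f‖ ≤ ‖t^{-1/2} f t^{1/2}‖, and moreover ‖t^{-1/2} f t^{1/2}‖ = ‖t^{1/2} f t^{-1/2}‖. -/

import Mathlib

/-!
Conjugation by the unit `√t` preserves the spectrum, the spectral radius bounds the norm from
below, and for the self-adjoint `f` it equals the norm. The two conjugates `√t⁻¹ f √t` and
`√t f √t⁻¹` are adjoints of each other, hence have the same norm.
-/

theorem spectrum.spectralRadius_units_conjugate' {𝕜 A : Type*} [NormedField 𝕜] [Ring A]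
    [Algebra 𝕜 A] (a : A) (u : Aˣ) :
    spectralRadius 𝕜 ((u⁻¹ : Aˣ) * a * u) = spectralRadius 𝕜 a := by
  simp only [spectralRadius, spectrum.units_conjugate']

theorem IsSelfAdjoint.norm_le_norm_units_conjugate {A : Type*} [CStarAlgebra A] {f : A}
    (hf : IsSelfAdjoint f) (u : Aˣ) : ‖f‖ ≤ ‖(u⁻¹ : Aˣ) * f * u‖ := by
  nontriviality A
  have h := spectrum.spectralRadius_le_nnnorm (𝕜 := ℂ) ((u⁻¹ : Aˣ) * f * u)
  rw [spectrum.spectralRadius_units_conjugate', hf.spectralRadius_eq_nnnorm] at h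
  exact_mod_cast h

theorem IsSelfAdjoint.norm_mul_mul_swap {A : Type*} [NonUnitalNormedRing A] [StarRing A]
    [NormedStarGroup A] {a b f : A} (hf : IsSelfAdjoint f) (ha : IsSelfAdjoint a)
    (hb : IsSelfAdjoint b) : ‖a * f * b‖ = ‖b * f * a‖ := by
  rw [← norm_star (a * f * b), star_mul, star_mul, ha.star_eq, hb.star_eq, hf.star_eq, mul_assoc]

/-- **Corollary A.3 (bounded case).** Let `A` be a unital C*-algebra, `f` a self-adjoint element,
and `t` a positive invertible element.  Then `‖f‖ ≤ ‖t^{-1/2} * f * t^{1/2}‖` and moreover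
`‖t^{-1/2} * f * t^{1/2}‖ = ‖t^{1/2} * f * t^{-1/2}‖`. -/
theorem norm_le_norm_sqrt_inv_mul_selfAdjoint_mul_sqrt
    {A : Type*} [CStarAlgebra A] [PartialOrder A] [StarOrderedRing A]
    (f t : A) (hf : IsSelfAdjoint f) (ht : 0 ≤ t) (htu : IsUnit t) :
    ‖f‖ ≤ ‖CFC.sqrt (Ring.inverse t) * f * CFC.sqrt t‖ ∧
    ‖CFC.sqrt (Ring.inverse t) * f * CFC.sqrt t‖ = ‖CFC.sqrt t * f * CFC.sqrt (Ring.inverse t)‖ := by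
  have hsqrt_inv : IsSelfAdjoint (CFC.sqrt (Ring.inverse t)) := (CFC.sqrt_nonneg _).isSelfAdjoint
  refine ⟨?_, hf.norm_mul_mul_swap hsqrt_inv (CFC.sqrt_nonneg t).isSelfAdjoint⟩
  obtain ⟨u, hu⟩ := (CFC.isUnit_sqrt_iff t ht).mpr htu
  rw [CFC.sqrt_ringInverse, ← hu, Ring.inverse_unit]
  exact hf.norm_le_norm_units_conjugate u
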